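/- Main theorem (loss decrease across a prompt update): Let E be a real inner product space, L > 0, μ > 0 with μ ≤ 2L, M ∈ ℝ, and let F_old, F_new : E → ℝ with F_old differentiable, nonnegative, L-smooth, and satisfying the μ-PL* condition. Let x* ∈ E be a global minimizer of F_old with G_old = F_old(x*) ≥ 0, let y* ∈ E be a global minimizer of F_new with G_new = F_new(y*), and suppose F_old(x_0) ≤ M where (x_t) is the gradient-descent sequence x_{t+1} = x_t − (1/L)·∇F_old(x_t) started from x_0 ∈ E. Fix τ ∈ ℕ and α ∈ ℝ, and suppose the prompt-update decrease condition F_old(x_τ) − F_new(x_τ) ≥ α holds. Then G_old − G_new ≥ α − (1 − μ/(2L))^τ · M. -/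

import Mathlib

/-!
Under L-smoothness a gradient step of length `1/L` lowers the loss by at least `‖∇F‖² / (2L)`,
and the PL* condition turns this into the contraction `F(x_{t+1}) ≤ (1 - μ/(2L)) F(x_t)`, so
`F_old(x_τ) ≤ (1 - μ/(2L))^τ M`. Since `F_new(x_τ) ≥ G_new` and `G_old ≥ 0`, the decrease `α`
produced by the prompt update can exceed `G_old - G_new` by at most `(1 - μ/(2L))^τ M`.
-/

open RealInnerProductSpace

section

variable {E : Type*} [NormedAddCommGroup E] [InnerProductSpace ℝ E]

theorem apply_sub_inv_smul_le_of_quadratic_upper_bound {f : E → ℝ} {L : ℝ} {x g : E}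
    (hquad : ∀ y, f y ≤ f x + ⟪g, y - x⟫ + L / 2 * ‖y - x‖ ^ 2) :
    f (x - (1 / L) • g) ≤ f x - ‖g‖ ^ 2 / (2 * L) := by
  have hstep : x - (1 / L) • g - x = -((1 / L) • g) := by abel
  have hinner : ⟪g, -((1 / L) • g)⟫ = -(‖g‖ ^ 2 / L) := by
    rw [inner_neg_right, real_inner_smul_right, real_inner_self_eq_norm_sq]; ring
  have hnorm : ‖-((1 / L) • g)‖ ^ 2 = ‖g‖ ^ 2 / L ^ 2 := by
    rw [norm_neg, norm_smul, mul_pow, Real.norm_eq_abs, sq_abs]; ring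
  calc f (x - (1 / L) • g)
      ≤ f x + -(‖g‖ ^ 2 / L) + L / 2 * (‖g‖ ^ 2 / L ^ 2) := by
        simpa only [hstep, hinner, hnorm] using hquad (x - (1 / L) • g)
    _ = f x - ‖g‖ ^ 2 / (2 * L) := by
        rcases eq_or_ne L 0 with rfl | hL
        · simp
        · field_simp; ring

theorem apply_sub_inv_smul_le_of_quadratic_upper_bound_of_PL {f : E → ℝ} {L μ : ℝ} {x g : E}
    (hL : 0 ≤ L) (hquad : ∀ y, f y ≤ f x + ⟪g, y - x⟫ + L / 2 * ‖y - x‖ ^ 2)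
    (hPL : μ * f x ≤ ‖g‖ ^ 2) :
    f (x - (1 / L) • g) ≤ (1 - μ / (2 * L)) * f x :=
  calc f (x - (1 / L) • g) ≤ f x - ‖g‖ ^ 2 / (2 * L) :=
        apply_sub_inv_smul_le_of_quadratic_upper_bound hquad
    _ ≤ f x - μ * f x / (2 * L) := by gcongr
    _ = (1 - μ / (2 * L)) * f x := by ring

end

theorem prompt_update_loss_decrease_general {E : Type*} [NormedAddCommGroup E]
    [InnerProductSpace ℝ E] [CompleteSpace E]
    (Fold Fnew : E → ℝ) (L μ M : ℝ) (hL : 0 < L) (hμL : μ ≤ 2 * L)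
    (hsmooth : ∀ x y : E,
      Fold y ≤ Fold x + ⟪gradient Fold x, y - x⟫ + L / 2 * ‖y - x‖ ^ 2)
    (hPL : ∀ x, μ * Fold x ≤ ‖gradient Fold x‖ ^ 2)
    (xstar : E) (hGold : 0 ≤ Fold xstar)
    (ystar : E) (hminNew : ∀ x, Fnew ystar ≤ Fnew x)
    (x : ℕ → E) (hgd : ∀ t, x (t + 1) = x t - (1 / L) • gradient Fold (x t))
    (hM : Fold (x 0) ≤ M)
    (τ : ℕ) (α : ℝ)
    (hdec : α ≤ Fold (x τ) - Fnew (x τ)) :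
    α - (1 - μ / (2 * L)) ^ τ * M ≤ Fold xstar - Fnew ystar := by
  have hq : 0 ≤ 1 - μ / (2 * L) := by
    rw [sub_nonneg, div_le_one (by positivity)]; exact hμL
  have hcontract : ∀ t, Fold (x (t + 1)) ≤ (1 - μ / (2 * L)) * Fold (x t) := fun t => by
    rw [hgd t]
    exact apply_sub_inv_smul_le_of_quadratic_upper_bound_of_PL hL.le (hsmooth (x t)) (hPL (x t))
  have hτ : Fold (x τ) ≤ (1 - μ / (2 * L)) ^ τ * M :=
    (le_geom (u := fun t => Fold (x t)) hq τ fun t _ => hcontract t).trans (by gcongr)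
  linarith [hminNew (x τ)]

/-- Main theorem: loss decrease across a prompt update. If `G_old = F_old(x*) ≥ 0` is the
minimal loss of `F_old`, `G_new = F_new(y*)` is the minimal loss of `F_new`,
`F_old(x_0) ≤ M`, and the prompt update decreases the loss by at least `α` after `τ`
gradient-descent steps on `F_old`, then `G_old − G_new ≥ α − (1 − μ/(2L))^τ · M`. -/
theorem prompt_update_loss_decrease {E : Type*} [NormedAddCommGroup E]
    [InnerProductSpace ℝ E] [CompleteSpace E]
    (Fold Fnew : E → ℝ) (L μ M : ℝ) (hL : 0 < L) (hμ : 0 < μ) (hμL : μ ≤ 2 * L)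
    (hdiff : Differentiable ℝ Fold)
    (hnonneg : ∀ x, 0 ≤ Fold x)
    (hsmooth : ∀ x y : E,
      Fold y ≤ Fold x + ⟪gradient Fold x, y - x⟫ + L / 2 * ‖y - x‖ ^ 2)
    (hPL : ∀ x, μ * Fold x ≤ ‖gradient Fold x‖ ^ 2)
    (xstar : E) (hminOld : ∀ x, Fold xstar ≤ Fold x) (hGold : 0 ≤ Fold xstar)
    (ystar : E) (hminNew : ∀ x, Fnew ystar ≤ Fnew x)
    (x : ℕ → E) (hgd : ∀ t, x (t + 1) = x t - (1 / L) • gradient Fold (x t))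
    (hM : Fold (x 0) ≤ M)
    (τ : ℕ) (α : ℝ)
    (hdec : α ≤ Fold (x τ) - Fnew (x τ)) :
    α - (1 - μ / (2 * L)) ^ τ * M ≤ Fold xstar - Fnew ystar :=
  prompt_update_loss_decrease_general Fold Fnew L μ M hL hμL hsmooth hPL xstar hGold ystar hminNew x
    hgd hM τ α hdec
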